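/- Let μ be a probability measure on ℝ with Cauchy transform G_μ, and set F_μ = 1/G_μ on ℂ⁺ (well defined since G_μ(z) ≠ 0 for z ∈ ℂ⁺). Then Im F_μ(z) ≥ Im z for all z ∈ ℂ⁺; and if Im F_μ(z) = Im z for some z ∈ ℂ⁺, then μ is a Dirac measure, i.e. μ = δ_a for some a ∈ ℝ. In particular, if μ is not a Dirac measure, then H_μ := F_μ − id maps ℂ⁺ into ℂ⁺. -/

import Mathlib

open MeasureTheory Filter Complex

/-- The Cauchy transform `G_μ(z) = ∫ (z − t)⁻¹ dμ(t)` of a measure `μ` on `ℝ`. -/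
noncomputable def cauchyTransform (μ : Measure ℝ) (z : ℂ) : ℂ :=
  ∫ t : ℝ, (z - (t : ℂ))⁻¹ ∂μ

/-!
For `f t = (z − t)⁻¹` one has `Im f = −Im z · ‖f‖²`, hence `Im G_μ(z) = −Im z · ∫ ‖f‖² dμ` and
`Im F_μ(z) = Im z · ∫ ‖f‖² dμ / ‖∫ f dμ‖²`. By the strict Jensen inequality for the strictly
convex `‖·‖²`, either `‖∫ f dμ‖² < ∫ ‖f‖² dμ`, or `f` is `μ`-a.e. constant, which pins `t` down to
the single point `z − 1 / G_μ(z)`, so that `μ` is a Dirac measure; and `F_{δ_a}(z) = z − a`.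
-/

theorem MeasureTheory.Measure.eq_dirac_of_ae_eq {α : Type*} [MeasurableSpace α]
    {μ : Measure α} [IsProbabilityMeasure μ] {a : α} (h : ∀ᵐ x ∂μ, x = a) :
    μ = Measure.dirac a := by
  calc μ = μ.map id := Measure.map_id.symm
    _ = μ.map (fun _ ↦ a) := Measure.map_congr h
    _ = Measure.dirac a := by rw [Measure.map_const, measure_univ, one_smul]

theorem strictConvexOn_norm_sq {E : Type*} [NormedAddCommGroup E] [InnerProductSpace ℝ E] :
    StrictConvexOn ℝ Set.univ fun x : E ↦ ‖x‖ ^ 2 := by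
  have : StrongConvexOn Set.univ 2 fun x : E ↦ ‖x‖ ^ 2 :=
    strongConvexOn_iff_convex.2 (by simpa using convexOn_const (0 : ℝ) convex_univ)
  exact this.strictConvexOn two_pos

theorem ae_eq_const_or_norm_integral_sq_lt {α E : Type*} [MeasurableSpace α]
    [NormedAddCommGroup E] [InnerProductSpace ℝ E] [CompleteSpace E]
    {μ : Measure α} [IsProbabilityMeasure μ] {f : α → E} (hf : Integrable f μ)
    (hf2 : Integrable (fun x ↦ ‖f x‖ ^ 2) μ) :
    f =ᵐ[μ] Function.const α (∫ x, f x ∂μ) ∨ ‖∫ x, f x ∂μ‖ ^ 2 < ∫ x, ‖f x‖ ^ 2 ∂μ := by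
  simpa only [average_eq_integral] using
    strictConvexOn_norm_sq.ae_eq_const_or_map_average_lt (continuous_norm.pow 2).continuousOn
      isClosed_univ (ae_of_all _ fun _ ↦ Set.mem_univ _) hf hf2

theorem Complex.inv_im_eq_neg_im_mul_norm_inv_sq (w : ℂ) : w⁻¹.im = -w.im * ‖w⁻¹‖ ^ 2 := by
  rw [inv_im, Complex.sq_norm, normSq_inv, div_eq_mul_inv]

section UpperHalfPlane

variable {z : ℂ}

theorem norm_inv_sub_ofReal_le (hz : 0 < z.im) (t : ℝ) : ‖(z - t)⁻¹‖ ≤ z.im⁻¹ := by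
  rw [norm_inv]
  refine inv_anti₀ hz ?_
  simpa using abs_im_le_norm (z - t) |>.trans' (le_abs_self _)

theorem integrable_inv_sub_ofReal {μ : Measure ℝ} [IsFiniteMeasure μ] (hz : 0 < z.im) :
    Integrable (fun t : ℝ ↦ (z - t)⁻¹) μ :=
  .of_bound (measurable_const.sub measurable_ofReal).inv.aestronglyMeasurable _
    (ae_of_all _ (norm_inv_sub_ofReal_le hz))

theorem integrable_norm_inv_sub_ofReal_sq {μ : Measure ℝ} [IsFiniteMeasure μ] (hz : 0 < z.im) :
    Integrable (fun t : ℝ ↦ ‖(z - t)⁻¹‖ ^ 2) μ :=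
  .of_bound ((integrable_inv_sub_ofReal hz).aestronglyMeasurable.norm.pow 2) (z.im⁻¹ ^ 2)
    (ae_of_all _ fun t ↦ by
      rw [norm_pow, norm_norm]
      exact pow_le_pow_left₀ (norm_nonneg _) (norm_inv_sub_ofReal_le hz t) 2)

theorem cauchyTransform_im {μ : Measure ℝ} [IsFiniteMeasure μ] (hz : 0 < z.im) :
    (cauchyTransform μ z).im = -z.im * ∫ t, ‖(z - t)⁻¹‖ ^ 2 ∂μ := by
  rw [cauchyTransform, ← integral_const_mul]
  have := integral_im (integrable_inv_sub_ofReal (μ := μ) hz)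
  simp only [RCLike.im_to_complex] at this
  simp_rw [← this, inv_im_eq_neg_im_mul_norm_inv_sq, sub_im, ofReal_im, sub_zero]

theorem cauchyTransform_dirac (a : ℝ) (z : ℂ) :
    cauchyTransform (Measure.dirac a) z = (z - a)⁻¹ :=
  integral_dirac _ a

theorem exists_eq_dirac_or_im_lt_im_inv_cauchyTransform (μ : Measure ℝ) [IsProbabilityMeasure μ]
    (hz : 0 < z.im) : (∃ a : ℝ, μ = Measure.dirac a) ∨ z.im < (cauchyTransform μ z)⁻¹.im := by
  rcases ae_eq_const_or_norm_integral_sq_lt (integrable_inv_sub_ofReal (μ := μ) hz)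
    (integrable_norm_inv_sub_ofReal_sq hz) with hconst | hlt
  · refine .inl ⟨(z - (cauchyTransform μ z)⁻¹).re, Measure.eq_dirac_of_ae_eq ?_⟩
    filter_upwards [hconst] with t ht
    rw [← cauchyTransform, Function.const_apply] at ht
    simp [← ht]
  · refine .inr ?_
    rw [← cauchyTransform] at hlt
    have hG := cauchyTransform_im (μ := μ) hz
    set G := cauchyTransform μ z
    set I := ∫ t, ‖(z - t)⁻¹‖ ^ 2 ∂μ
    have hG0 : G ≠ 0 := by
      rintro hG0
      rw [hG0, zero_im, zero_eq_mul] at hG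
      rw [hG0, norm_zero] at hlt
      rcases hG with h | h <;> linarith
    rw [inv_im, hG, ← Complex.sq_norm, lt_div_iff₀ (by positivity)]
    nlinarith

end UpperHalfPlane

/-- For a probability measure `μ` on `ℝ` with `F_μ = 1/G_μ` one has
`Im F_μ(z) ≥ Im z` on the upper half-plane, with equality somewhere only for Dirac
measures; in particular if `μ` is not a Dirac measure then `H_μ = F_μ − id` maps the
upper half-plane into itself. -/
theorem imaginary_part_of_reciprocal_cauchyTransform
    (μ : Measure ℝ) [IsProbabilityMeasure μ] :
    (∀ z : ℂ, 0 < z.im → z.im ≤ ((cauchyTransform μ z)⁻¹).im) ∧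
    ((∃ z : ℂ, 0 < z.im ∧ ((cauchyTransform μ z)⁻¹).im = z.im) →
      ∃ a : ℝ, μ = Measure.dirac a) ∧
    ((¬ ∃ a : ℝ, μ = Measure.dirac a) →
      ∀ z : ℂ, 0 < z.im → 0 < ((cauchyTransform μ z)⁻¹ - z).im) := by
  refine ⟨fun z hz ↦ ?_, fun ⟨z, hz, heq⟩ ↦ ?_, fun hμ z hz ↦ ?_⟩
  · rcases exists_eq_dirac_or_im_lt_im_inv_cauchyTransform μ hz with ⟨a, rfl⟩ | hlt
    · simp [cauchyTransform_dirac]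
    · exact hlt.le
  · exact (exists_eq_dirac_or_im_lt_im_inv_cauchyTransform μ hz).resolve_right heq.not_gt
  · rw [sub_im, sub_pos]
    exact (exists_eq_dirac_or_im_lt_im_inv_cauchyTransform μ hz).resolve_left hμ
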